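/- C^1 joining condition across an edge: let t = [v_i, v_j, v_k] and t' = [v_i, v_j, v_{k'}] be two nondegenerate triangles sharing the edge [v_i, v_j], with v_k and v_{k'} on opposite sides of the line through v_i and v_j. Let P and P' be bivariate cubic polynomials on t and t' with Bernstein–Bézier coefficients β_d and β'_d respectively. If P and P' agree to first order at v_i and at v_j (same values and gradients at both vertices) and moreover β'_{(1,1,1)} = τ_i(v_{k'}) β_{(2,1,0)} + τ_j(v_{k'}) β_{(1,2,0)} + τ_k(v_{k'}) β_{(1,1,1)}, where (τ_i, τ_j, τ_k) are the barycentric coordinates with respect to t, then the function equal to P on t and P' on t' is continuously differentiable across the interior of the edge [v_i, v_j]. -/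

import Mathlib

open Finset

/-- The set of multi-indices of nonnegative integers summing to 3. -/
def D3 : Finset (ℕ × ℕ × ℕ) :=
  ((range 4) ×ˢ (range 4) ×ˢ (range 4)).filter fun d => d.1 + d.2.1 + d.2.2 = 3

/-- The cubic Bernstein basis polynomial associated with barycentric
coordinate functions `τ0, τ1, τ2` and a multi-index `d`. -/
noncomputable def bern (τ0 τ1 τ2 : EuclideanSpace ℝ (Fin 2) → ℝ)
    (d : ℕ × ℕ × ℕ) (p : EuclideanSpace ℝ (Fin 2)) : ℝ :=
  ((Nat.factorial 3 : ℝ) /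
      ((Nat.factorial d.1 : ℝ) * (Nat.factorial d.2.1) * (Nat.factorial d.2.2))) *
    τ0 p ^ d.1 * τ1 p ^ d.2.1 * τ2 p ^ d.2.2

open Set Topology

/-! Write both cubics in the barycentric coordinates `(x, y, z)` of `t'`. The coordinates of `t`
are affine, so `P` becomes the cubic form with coefficients `β` evaluated at
`(x + a z, y + b z, c z)`, where `(a, b, c)` are the `t`-coordinates of `v_{k'}`. First-order
agreement at `v_i` and `v_j`, read off along the edge and towards `v_{k'}`, kills every
coefficient of `P' - P` of degree `0` or `1` in `z` except the central one, and that one vanishes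
by the hypothesis on `β'_{(1,1,1)}`. Hence `P' - P = z² · (linear form)`, so `P` and `P'` agree to
first order on the whole line `z = 0`; gluing two `C¹` functions along the frontier of a set on
which they agree to first order gives a `C¹` function. -/

def AgreeToFirstOrderAt (𝕜 : Type*) {E F : Type*} [NontriviallyNormedField 𝕜]
    [NormedAddCommGroup E] [NormedSpace 𝕜 E] [NormedAddCommGroup F] [NormedSpace 𝕜 F]
    (f g : E → F) (x : E) : Prop :=
  f x = g x ∧ fderiv 𝕜 f x = fderiv 𝕜 g x

section Gluing

variable {𝕜 E F G : Type*} [NontriviallyNormedField 𝕜] [NormedAddCommGroup E] [NormedSpace 𝕜 E]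
  [NormedAddCommGroup F] [NormedSpace 𝕜 F] [NormedAddCommGroup G] [NormedSpace 𝕜 G]

theorem HasFDerivAt.zero_of_norm_le {φ : E → F} {ψ : E → G} {x : E}
    (hφ : HasFDerivAt φ (0 : E →L[𝕜] F) x) (hφx : φ x = 0) (hle : ∀ y, ‖ψ y‖ ≤ ‖φ y‖) :
    HasFDerivAt ψ (0 : E →L[𝕜] G) x := by
  have hψx : ψ x = 0 := norm_le_zero_iff.mp (by simpa [hφx] using hle x)
  rw [hasFDerivAt_iff_isLittleO_nhds_zero] at hφ ⊢
  simp only [hφx, hψx, sub_zero, zero_apply] at hφ ⊢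
  exact (Asymptotics.isBigO_of_le _ fun h => hle (x + h)).trans_isLittleO hφ

theorem HasFDerivAt.sq_mul_of_eq_zero {z r : E → 𝕜} {z' : E →L[𝕜] 𝕜} {x : E}
    (hz : HasFDerivAt z z' x) (hr : DifferentiableAt 𝕜 r x) (hzx : z x = 0) :
    HasFDerivAt (fun q => z q ^ 2 * r q) (0 : E →L[𝕜] 𝕜) x :=
  ((hz.pow 2).fun_mul hr.hasFDerivAt).congr_fderiv (by ext; simp [hzx])

theorem hasFDerivAt_piecewise {s : Set E} [∀ x, Decidable (x ∈ s)] {f g : E → F} {x : E}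
    (hf : DifferentiableAt 𝕜 f x) (hg : DifferentiableAt 𝕜 g x)
    (hfg : x ∈ frontier s → AgreeToFirstOrderAt 𝕜 f g x) :
    HasFDerivAt (s.piecewise f g) (s.piecewise (fderiv 𝕜 f) (fderiv 𝕜 g) x) x := by
  by_cases hx : x ∈ frontier s
  · obtain ⟨hval, hder⟩ := hfg hx
    -- on the frontier, the jump `g - f` is `o(‖y - x‖)`, hence so is its restriction to `sᶜ`
    have hsplit : s.piecewise f g = fun y => f y + sᶜ.indicator (fun y => g y - f y) y := by
      funext y
      by_cases hy : y ∈ s <;> simp [hy]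
    have hjump : HasFDerivAt (fun y => g y - f y) (0 : E →L[𝕜] F) x := by
      simpa [hder] using hg.hasFDerivAt.fun_sub hf.hasFDerivAt
    have hind := hjump.zero_of_norm_le (by simp [hval])
      (norm_indicator_le_norm_self (s := sᶜ) (fun y => g y - f y))
    rw [hsplit, show s.piecewise (fderiv 𝕜 f) (fderiv 𝕜 g) x = fderiv 𝕜 f x + 0 by
      by_cases hxs : x ∈ s <;> simp [hxs, hder]]
    exact hf.hasFDerivAt.add hind
  · by_cases hxs : x ∈ s
    · have hloc : s.piecewise f g =ᶠ[𝓝 x] f :=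
        Filter.mem_of_superset (mem_interior_iff_mem_nhds.mp
          ((mem_interior_iff_notMem_frontier hxs).mpr hx)) fun y hy => by simp [hy]
      simpa [hxs] using hf.hasFDerivAt.congr_of_eventuallyEq hloc
    · have hloc : s.piecewise f g =ᶠ[𝓝 x] g :=
        Filter.mem_of_superset (mem_interior_iff_mem_nhds.mp
          ((mem_interior_iff_notMem_frontier (s := sᶜ) hxs).mpr (by rwa [frontier_compl])))
          fun y hy => by simp [Set.notMem_of_mem_compl hy]
      simpa [hxs] using hg.hasFDerivAt.congr_of_eventuallyEq hloc

theorem ContDiff.piecewise_of_frontier {s : Set E} [∀ x, Decidable (x ∈ s)] {f g : E → F}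
    (hf : ContDiff 𝕜 1 f) (hg : ContDiff 𝕜 1 g)
    (hfg : ∀ x ∈ frontier s, AgreeToFirstOrderAt 𝕜 f g x) :
    ContDiff 𝕜 1 (s.piecewise f g) := by
  have hderiv : ∀ x, HasFDerivAt (s.piecewise f g) (s.piecewise (fderiv 𝕜 f) (fderiv 𝕜 g) x) x :=
    fun x => hasFDerivAt_piecewise (hf.differentiable one_ne_zero x)
      (hg.differentiable one_ne_zero x) (hfg x)
  rw [contDiff_one_iff_fderiv, funext fun x => (hderiv x).fderiv]
  exact ⟨fun x => (hderiv x).differentiableAt, (hf.continuous_fderiv one_ne_zero).piecewise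
    (fun x hx => (hfg x hx).2) (hg.continuous_fderiv one_ne_zero)⟩

end Gluing

section AffineBasis

variable {k V P ι : Type*}

def AffineIndependent.toAffineBasis [DivisionRing k] [AddCommGroup V] [Module k V]
    [AddTorsor V P] [Fintype ι] [FiniteDimensional k V] {v : ι → P} (hv : AffineIndependent k v)
    (hcard : Fintype.card ι = Module.finrank k V + 1) : AffineBasis ι k P :=
  ⟨v, hv, hv.affineSpan_eq_top_iff_card_eq_finrank_add_one.mpr hcard⟩

@[simp]
theorem AffineIndependent.coe_toAffineBasis [DivisionRing k] [AddCommGroup V] [Module k V]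
    [AddTorsor V P] [Fintype ι] [FiniteDimensional k V] {v : ι → P} (hv : AffineIndependent k v)
    (hcard : Fintype.card ι = Module.finrank k V + 1) : ⇑(hv.toAffineBasis hcard) = v :=
  rfl

theorem AffineBasis.coord_eq_of_barycentric [Ring k] [AddCommGroup V] [Module k V]
    (b : AffineBasis (Fin 3) k V) {σ₀ σ₁ σ₂ : V → k}
    (h : ∀ p, σ₀ p + σ₁ p + σ₂ p = 1 ∧ p = σ₀ p • b 0 + σ₁ p • b 1 + σ₂ p • b 2) :
    σ₀ = b.coord 0 ∧ σ₁ = b.coord 1 ∧ σ₂ = b.coord 2 := by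
  have hcoord : ∀ p i, b.coord i p = ![σ₀ p, σ₁ p, σ₂ p] i := by
    intro p i
    have hw : ∑ j, ![σ₀ p, σ₁ p, σ₂ p] j = 1 := by simpa [Fin.sum_univ_three] using (h p).1
    have hp : p = Finset.univ.affineCombination k b ![σ₀ p, σ₁ p, σ₂ p] := by
      rw [Finset.affineCombination_eq_linear_combination _ _ _ hw]
      simpa [Fin.sum_univ_three] using (h p).2
    exact (congrArg (b.coord i) hp).trans (b.coord_apply_combination_of_mem (mem_univ i) hw)
  exact ⟨funext fun p => (hcoord p 0).symm, funext fun p => (hcoord p 1).symm,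
    funext fun p => (hcoord p 2).symm⟩

theorem AffineMap.apply_eq_sum_coord_mul [Ring k] [AddCommGroup V] [Module k V] [Fintype ι]
    (f : V →ᵃ[k] k) (b : AffineBasis ι k V) (q : V) : f q = ∑ i, b.coord i q * f (b i) := by
  conv_lhs => rw [← b.affineCombination_coord_eq_self q]
  rw [Finset.map_affineCombination _ _ _ (b.sum_coord_apply_eq_one q),
    Finset.affineCombination_eq_linear_combination _ _ _ (b.sum_coord_apply_eq_one q)]
  rfl

theorem AffineBasis.coord_apply_of_eq [Ring k] [AddCommGroup V] [Module k V] [DecidableEq ι]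
    (b : AffineBasis ι k V) {i j : ι} {x : V} (hx : b j = x) :
    b.coord i x = if i = j then 1 else 0 :=
  hx ▸ b.coord_apply i j

section SharedEdge

variable [Field k] [AddCommGroup V] [Module k V] {b b' : AffineBasis (Fin 3) k V}

theorem AffineBasis.coord_eq_of_shared_edge (h₀ : b' 0 = b 0) (h₁ : b' 1 = b 1) (i : Fin 3)
    (q : V) :
    b.coord i q = b'.coord 0 q * b.coord i (b 0) + b'.coord 1 q * b.coord i (b 1)
      + b'.coord 2 q * b.coord i (b' 2) := by
  rw [(b.coord i).apply_eq_sum_coord_mul b' q, Fin.sum_univ_three, h₀, h₁]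

theorem AffineBasis.coord_eq_zero_of_shared_edge (h₀ : b' 0 = b 0) (h₁ : b' 1 = b 1) {x : V}
    (hx : b.coord 2 x = 0) : b'.coord 2 x = 0 := by
  have hc : b.coord 2 (b' 2) ≠ 0 := by
    intro hc
    simpa [hc] using coord_eq_of_shared_edge h₀ h₁ 2 (b 2)
  simpa [hc] using (coord_eq_of_shared_edge h₀ h₁ 2 x).symm.trans hx

end SharedEdge

variable [NormedAddCommGroup V] [NormedSpace ℝ V] [FiniteDimensional ℝ V]

@[fun_prop]
theorem AffineBasis.contDiff_coord (b : AffineBasis ι ℝ V) (i : ι) {n : WithTop ℕ∞} :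
    ContDiff ℝ n (b.coord i) :=
  (smooth_barycentric_coord b i).of_le le_top

theorem AffineBasis.fderiv_coord_apply_sub (b : AffineBasis ι ℝ V) (i : ι) (x y : V) :
    fderiv ℝ (b.coord i) x (y - x) = b.coord i y - b.coord i x := by
  let f : V →ᴬ[ℝ] ℝ := ⟨b.coord i, continuous_barycentric_coord b i⟩
  change fderiv ℝ f x (y - x) = f y - f x
  rw [f.fderiv, ← vsub_eq_sub, f.contLinear_map_vsub, vsub_eq_sub]

theorem AffineBasis.eventually_mem_convexHull_iff (b : AffineBasis (Fin 3) ℝ V) {p : V}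
    (hp : p ∈ openSegment ℝ (b 0) (b 1)) :
    ∀ᶠ q in 𝓝 p, q ∈ convexHull ℝ (range b) ↔ 0 ≤ b.coord 2 q := by
  rw [openSegment_eq_image_lineMap] at hp
  obtain ⟨t, ⟨ht0, ht1⟩, rfl⟩ := hp
  have hnear : ∀ i, 0 < b.coord i (AffineMap.lineMap (b 0) (b 1) t) →
      ∀ᶠ q in 𝓝 (AffineMap.lineMap (b 0) (b 1) t), 0 < b.coord i q := fun i hi =>
    continuousAt_const.eventually_lt (b.contDiff_coord i (n := 0)).continuous.continuousAt hi
  have h0 : b.coord 0 (AffineMap.lineMap (b 0) (b 1) t) = 1 - t := by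
    simp [AffineMap.apply_lineMap, AffineMap.lineMap_apply_ring]
  have h1 : b.coord 1 (AffineMap.lineMap (b 0) (b 1) t) = t := by
    simp [AffineMap.apply_lineMap, AffineMap.lineMap_apply_ring]
  filter_upwards [hnear 0 (by rw [h0]; linarith), hnear 1 (by rw [h1]; exact ht0)] with q hq0 hq1
  rw [b.convexHull_eq_nonneg_coord, mem_ofPred_eq, Fin.forall_fin_succ, Fin.forall_fin_two]
  exact ⟨fun h => h.2.2, fun h => ⟨hq0.le, hq1.le, h⟩⟩

end AffineBasis

def bernsteinForm (γ : ℕ × ℕ × ℕ → ℝ) (x y z : ℝ) : ℝ :=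
  γ (3, 0, 0) * x ^ 3 + 3 * γ (2, 1, 0) * x ^ 2 * y + 3 * γ (1, 2, 0) * x * y ^ 2
    + γ (0, 3, 0) * y ^ 3 + 3 * γ (2, 0, 1) * x ^ 2 * z + 6 * γ (1, 1, 1) * x * y * z
    + 3 * γ (0, 2, 1) * y ^ 2 * z + 3 * γ (1, 0, 2) * x * z ^ 2 + 3 * γ (0, 1, 2) * y * z ^ 2
    + γ (0, 0, 3) * z ^ 3

def bernsteinFormDerivX (γ : ℕ × ℕ × ℕ → ℝ) (x y z : ℝ) : ℝ :=
  3 * (γ (3, 0, 0) * x ^ 2 + 2 * γ (2, 1, 0) * x * y + γ (1, 2, 0) * y ^ 2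
    + 2 * γ (2, 0, 1) * x * z + 2 * γ (1, 1, 1) * y * z + γ (1, 0, 2) * z ^ 2)

def bernsteinFormDerivY (γ : ℕ × ℕ × ℕ → ℝ) (x y z : ℝ) : ℝ :=
  3 * (γ (2, 1, 0) * x ^ 2 + 2 * γ (1, 2, 0) * x * y + γ (0, 3, 0) * y ^ 2
    + 2 * γ (1, 1, 1) * x * z + 2 * γ (0, 2, 1) * y * z + γ (0, 1, 2) * z ^ 2)

def bernsteinFormDerivZ (γ : ℕ × ℕ × ℕ → ℝ) (x y z : ℝ) : ℝ :=
  3 * (γ (2, 0, 1) * x ^ 2 + 2 * γ (1, 1, 1) * x * y + γ (0, 2, 1) * y ^ 2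
    + 2 * γ (1, 0, 2) * x * z + 2 * γ (0, 1, 2) * y * z + γ (0, 0, 3) * z ^ 2)

theorem sum_mul_bern_eq_bernsteinForm (γ : ℕ × ℕ × ℕ → ℝ)
    (τ₀ τ₁ τ₂ : EuclideanSpace ℝ (Fin 2) → ℝ) (p : EuclideanSpace ℝ (Fin 2)) :
    ∑ d ∈ D3, γ d * bern τ₀ τ₁ τ₂ d p = bernsteinForm γ (τ₀ p) (τ₁ p) (τ₂ p) := by
  have hD3 : D3 = {(3, 0, 0), (2, 1, 0), (1, 2, 0), (0, 3, 0), (2, 0, 1), (1, 1, 1), (0, 2, 1),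
      (1, 0, 2), (0, 1, 2), (0, 0, 3)} := by decide
  rw [hD3]
  repeat rw [Finset.sum_insert (by decide)]
  simp only [Finset.sum_singleton, bern, bernsteinForm, Nat.factorial_zero, Nat.factorial_succ,
    Nat.cast_one, Nat.cast_mul]
  ring

theorem HasFDerivAt.bernsteinForm {E : Type*} [NormedAddCommGroup E] [NormedSpace ℝ E]
    (γ : ℕ × ℕ × ℕ → ℝ) {f₀ f₁ f₂ : E → ℝ} {f₀' f₁' f₂' : E →L[ℝ] ℝ} {x : E}
    (h₀ : HasFDerivAt f₀ f₀' x) (h₁ : HasFDerivAt f₁ f₁' x) (h₂ : HasFDerivAt f₂ f₂' x) :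
    HasFDerivAt (fun q => bernsteinForm γ (f₀ q) (f₁ q) (f₂ q))
      (bernsteinFormDerivX γ (f₀ x) (f₁ x) (f₂ x) • f₀'
        + bernsteinFormDerivY γ (f₀ x) (f₁ x) (f₂ x) • f₁'
        + bernsteinFormDerivZ γ (f₀ x) (f₁ x) (f₂ x) • f₂') x := by
  have h := (((((((((((h₀.pow 3).const_mul (γ (3, 0, 0))).fun_add
    (((h₀.pow 2).const_mul (3 * γ (2, 1, 0))).fun_mul h₁)).fun_add
    (((h₀.const_mul (3 * γ (1, 2, 0))).fun_mul (h₁.pow 2)))).fun_add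
    ((h₁.pow 3).const_mul (γ (0, 3, 0)))).fun_add
    (((h₀.pow 2).const_mul (3 * γ (2, 0, 1))).fun_mul h₂)).fun_add
    ((((h₀.const_mul (6 * γ (1, 1, 1))).fun_mul h₁).fun_mul h₂))).fun_add
    (((h₁.pow 2).const_mul (3 * γ (0, 2, 1))).fun_mul h₂)).fun_add
    ((h₀.const_mul (3 * γ (1, 0, 2))).fun_mul (h₂.pow 2))).fun_add
    ((h₁.const_mul (3 * γ (0, 1, 2))).fun_mul (h₂.pow 2))).fun_add
    ((h₂.pow 3).const_mul (γ (0, 0, 3))))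
  refine h.congr_fderiv ?_
  ext v
  simp only [add_apply, smul_apply, smul_eq_mul, nsmul_eq_mul, Nat.cast_ofNat, Nat.add_one_sub_one,
    pow_one, bernsteinFormDerivX, bernsteinFormDerivY, bernsteinFormDerivZ]
  ring

theorem bernsteinForm_sub_eq_sq_mul {β β' : ℕ × ℕ × ℕ → ℝ} {a b c : ℝ}
    (h300 : β' (3, 0, 0) = β (3, 0, 0)) (h210 : β' (2, 1, 0) = β (2, 1, 0))
    (h120 : β' (1, 2, 0) = β (1, 2, 0)) (h030 : β' (0, 3, 0) = β (0, 3, 0))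
    (h201 : β' (2, 0, 1) = a * β (3, 0, 0) + b * β (2, 1, 0) + c * β (2, 0, 1))
    (h111 : β' (1, 1, 1) = a * β (2, 1, 0) + b * β (1, 2, 0) + c * β (1, 1, 1))
    (h021 : β' (0, 2, 1) = a * β (1, 2, 0) + b * β (0, 3, 0) + c * β (0, 2, 1)) :
    ∃ l₀ l₁ l₂ : ℝ, ∀ x y z, bernsteinForm β' x y z
        - bernsteinForm β (x + a * z) (y + b * z) (c * z) = z ^ 2 * (l₀ * x + l₁ * y + l₂ * z) := by
  -- the `z²`- and `z³`-coefficients of `bernsteinForm β` along `(x, y, 0) + z • (a, b, c)`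
  refine ⟨3 * (β' (1, 0, 2) - (a ^ 2 * β (3, 0, 0) + 2 * a * b * β (2, 1, 0) + b ^ 2 * β (1, 2, 0)
      + 2 * a * c * β (2, 0, 1) + 2 * b * c * β (1, 1, 1) + c ^ 2 * β (1, 0, 2))),
    3 * (β' (0, 1, 2) - (a ^ 2 * β (2, 1, 0) + 2 * a * b * β (1, 2, 0) + b ^ 2 * β (0, 3, 0)
      + 2 * a * c * β (1, 1, 1) + 2 * b * c * β (0, 2, 1) + c ^ 2 * β (0, 1, 2))),
    β' (0, 0, 3) - bernsteinForm β a b c, fun x y z => ?_⟩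
  unfold bernsteinForm
  linear_combination x ^ 3 * h300 + 3 * x ^ 2 * y * h210 + 3 * x * y ^ 2 * h120 + y ^ 3 * h030
    + 3 * x ^ 2 * z * h201 + 6 * x * y * z * h111 + 3 * y ^ 2 * z * h021

namespace AffineBasis

section Module

variable {V : Type*} [AddCommGroup V] [Module ℝ V]

noncomputable def bernsteinPoly (b : AffineBasis (Fin 3) ℝ V) (γ : ℕ × ℕ × ℕ → ℝ) (q : V) : ℝ :=
  bernsteinForm γ (b.coord 0 q) (b.coord 1 q) (b.coord 2 q)

theorem bernsteinPoly_eq_of_shared_edge {b b' : AffineBasis (Fin 3) ℝ V} (h₀ : b' 0 = b 0)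
    (h₁ : b' 1 = b 1) (γ : ℕ × ℕ × ℕ → ℝ) (q : V) :
    b.bernsteinPoly γ q = bernsteinForm γ (b'.coord 0 q + b.coord 0 (b' 2) * b'.coord 2 q)
      (b'.coord 1 q + b.coord 1 (b' 2) * b'.coord 2 q) (b.coord 2 (b' 2) * b'.coord 2 q) := by
  simp only [bernsteinPoly, coord_eq_of_shared_edge h₀ h₁ _ q, coord_apply, Fin.reduceEq,
    ↓reduceIte]
  congr 1 <;> ring

end Module

variable {V : Type*} [NormedAddCommGroup V] [NormedSpace ℝ V] [FiniteDimensional ℝ V]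

section OneTriangle

variable (b : AffineBasis (Fin 3) ℝ V) (γ : ℕ × ℕ × ℕ → ℝ)

theorem contDiff_bernsteinPoly {n : WithTop ℕ∞} : ContDiff ℝ n (b.bernsteinPoly γ) := by
  unfold bernsteinPoly bernsteinForm
  fun_prop

theorem fderiv_bernsteinPoly_apply_sub (x y : V) :
    fderiv ℝ (b.bernsteinPoly γ) x (y - x) =
      bernsteinFormDerivX γ (b.coord 0 x) (b.coord 1 x) (b.coord 2 x)
          * (b.coord 0 y - b.coord 0 x)
        + bernsteinFormDerivY γ (b.coord 0 x) (b.coord 1 x) (b.coord 2 x)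
          * (b.coord 1 y - b.coord 1 x)
        + bernsteinFormDerivZ γ (b.coord 0 x) (b.coord 1 x) (b.coord 2 x)
          * (b.coord 2 y - b.coord 2 x) := by
  have hcoord : ∀ i, HasFDerivAt (b.coord i) (fderiv ℝ (b.coord i) x) x := fun i =>
    ((b.contDiff_coord i (n := 1)).differentiable one_ne_zero x).hasFDerivAt
  have h : HasFDerivAt (b.bernsteinPoly γ) _ x := (hcoord 0).bernsteinForm γ (hcoord 1) (hcoord 2)
  simp [h.fderiv, fderiv_coord_apply_sub]

end OneTriangle

variable {b b' : AffineBasis (Fin 3) ℝ V} {β β' : ℕ × ℕ × ℕ → ℝ}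

theorem coeff_eq_of_agreeToFirstOrderAt_vertex_zero (h₀ : b' 0 = b 0) (h₁ : b' 1 = b 1)
    (h : AgreeToFirstOrderAt ℝ (b.bernsteinPoly β) (b'.bernsteinPoly β') (b 0)) :
    β' (3, 0, 0) = β (3, 0, 0) ∧ β' (2, 1, 0) = β (2, 1, 0) ∧
      β' (2, 0, 1) = b.coord 0 (b' 2) * β (3, 0, 0) + b.coord 1 (b' 2) * β (2, 1, 0)
        + b.coord 2 (b' 2) * β (2, 0, 1) := by
  obtain ⟨hval, hder⟩ := h
  have halong := congrArg (· (b 1 - b 0)) hder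
  have hacross := congrArg (· (b' 2 - b 0)) hder
  simp only [fderiv_bernsteinPoly_apply_sub] at halong hacross
  simp only [bernsteinPoly, bernsteinForm, bernsteinFormDerivX, bernsteinFormDerivY,
    bernsteinFormDerivZ, coord_apply, b'.coord_apply, b'.coord_apply_of_eq h₀,
    b'.coord_apply_of_eq h₁, Fin.reduceEq, ↓reduceIte] at hval halong hacross
  exact ⟨by linear_combination -hval, by linear_combination (-1 / 3 : ℝ) * halong - hval,
    by linear_combination (-1 / 3 : ℝ) * hacross - hval⟩

theorem coeff_eq_of_agreeToFirstOrderAt_vertex_one (h₀ : b' 0 = b 0) (h₁ : b' 1 = b 1)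
    (h : AgreeToFirstOrderAt ℝ (b.bernsteinPoly β) (b'.bernsteinPoly β') (b 1)) :
    β' (0, 3, 0) = β (0, 3, 0) ∧ β' (1, 2, 0) = β (1, 2, 0) ∧
      β' (0, 2, 1) = b.coord 0 (b' 2) * β (1, 2, 0) + b.coord 1 (b' 2) * β (0, 3, 0)
        + b.coord 2 (b' 2) * β (0, 2, 1) := by
  obtain ⟨hval, hder⟩ := h
  have halong := congrArg (· (b 0 - b 1)) hder
  have hacross := congrArg (· (b' 2 - b 1)) hder
  simp only [fderiv_bernsteinPoly_apply_sub] at halong hacross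
  simp only [bernsteinPoly, bernsteinForm, bernsteinFormDerivX, bernsteinFormDerivY,
    bernsteinFormDerivZ, coord_apply, b'.coord_apply, b'.coord_apply_of_eq h₀,
    b'.coord_apply_of_eq h₁, Fin.reduceEq, ↓reduceIte] at hval halong hacross
  exact ⟨by linear_combination -hval, by linear_combination (-1 / 3 : ℝ) * halong - hval,
    by linear_combination (-1 / 3 : ℝ) * hacross - hval⟩

theorem agreeToFirstOrderAt_of_coord_eq_zero (h₀ : b' 0 = b 0) (h₁ : b' 1 = b 1)
    (hv₀ : AgreeToFirstOrderAt ℝ (b.bernsteinPoly β) (b'.bernsteinPoly β') (b 0))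
    (hv₁ : AgreeToFirstOrderAt ℝ (b.bernsteinPoly β) (b'.bernsteinPoly β') (b 1))
    (hcoef : β' (1, 1, 1) = b.coord 0 (b' 2) * β (2, 1, 0) + b.coord 1 (b' 2) * β (1, 2, 0)
      + b.coord 2 (b' 2) * β (1, 1, 1))
    {x : V} (hx : b.coord 2 x = 0) :
    AgreeToFirstOrderAt ℝ (b.bernsteinPoly β) (b'.bernsteinPoly β') x := by
  obtain ⟨h300, h210, h201⟩ := coeff_eq_of_agreeToFirstOrderAt_vertex_zero h₀ h₁ hv₀
  obtain ⟨h030, h120, h021⟩ := coeff_eq_of_agreeToFirstOrderAt_vertex_one h₀ h₁ hv₁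
  obtain ⟨l₀, l₁, l₂, hl⟩ := bernsteinForm_sub_eq_sq_mul h300 h210 h120 h030 h201 hcoef h021
  have hsub : (fun q => b'.bernsteinPoly β' q - b.bernsteinPoly β q) = fun q =>
      b'.coord 2 q ^ 2 * (l₀ * b'.coord 0 q + l₁ * b'.coord 1 q + l₂ * b'.coord 2 q) := by
    funext q
    rw [bernsteinPoly_eq_of_shared_edge h₀ h₁, ← hl]
    rfl
  have hx' := coord_eq_zero_of_shared_edge h₀ h₁ hx
  have hlin : ContDiff ℝ 1 fun q => l₀ * b'.coord 0 q + l₁ * b'.coord 1 q + l₂ * b'.coord 2 q := by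
    fun_prop
  have hD : HasFDerivAt (fun q => b'.bernsteinPoly β' q - b.bernsteinPoly β q)
      (0 : V →L[ℝ] ℝ) x := by
    rw [hsub]
    exact ((b'.contDiff_coord 2 (n := 1)).differentiable one_ne_zero x).hasFDerivAt
      |>.sq_mul_of_eq_zero (hlin.differentiable one_ne_zero x) hx'
  have hP := (contDiff_bernsteinPoly b β (n := 1)).differentiable one_ne_zero x
  have hP' := (contDiff_bernsteinPoly b' β' (n := 1)).differentiable one_ne_zero x
  refine ⟨?_, ?_⟩
  · have hdiff := congrFun hsub x
    simp only [hx'] at hdiff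
    linarith
  · rw [eq_comm, ← sub_eq_zero, ← fderiv_fun_sub hP' hP, hD.fderiv]

end AffineBasis

theorem c1_join_across_edge_general
    (vi vj vk vk' : EuclideanSpace ℝ (Fin 2))
    (ht : AffineIndependent ℝ ![vi, vj, vk])
    (ht' : AffineIndependent ℝ ![vi, vj, vk'])
    (τi τj τk : EuclideanSpace ℝ (Fin 2) → ℝ)
    (hbary : ∀ p, τi p + τj p + τk p = 1 ∧
      p = τi p • vi + τj p • vj + τk p • vk)
    (τi' τj' τk' : EuclideanSpace ℝ (Fin 2) → ℝ)
    (hbary' : ∀ p, τi' p + τj' p + τk' p = 1 ∧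
      p = τi' p • vi + τj' p • vj + τk' p • vk')
    (P P' : EuclideanSpace ℝ (Fin 2) → ℝ) (β β' : ℕ × ℕ × ℕ → ℝ)
    (hP : ∀ p, P p = ∑ d ∈ D3, β d * bern τi τj τk d p)
    (hP' : ∀ p, P' p = ∑ d ∈ D3, β' d * bern τi' τj' τk' d p)
    -- P and P' agree to first order at vi and vj:
    (hvi : P vi = P' vi) (hvi' : fderiv ℝ P vi = fderiv ℝ P' vi)
    (hvj : P vj = P' vj) (hvj' : fderiv ℝ P vj = fderiv ℝ P' vj)
    -- the coefficient condition:
    (hcoef : β' (1, 1, 1) =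
      τi vk' * β (2, 1, 0) + τj vk' * β (1, 2, 0) + τk vk' * β (1, 1, 1))
    -- S equals P on the triangle t and P' elsewhere (in particular on t'):
    (S : EuclideanSpace ℝ (Fin 2) → ℝ)
    (hS : ∀ q, (q ∈ convexHull ℝ ({vi, vj, vk} : Set (EuclideanSpace ℝ (Fin 2))) →
        S q = P q) ∧
      (q ∉ convexHull ℝ ({vi, vj, vk} : Set (EuclideanSpace ℝ (Fin 2))) →
        S q = P' q)) :
    ∀ p ∈ openSegment ℝ vi vj, ContDiffAt ℝ 1 S p := by
  intro p hp
  have hcard : Fintype.card (Fin 3) = Module.finrank ℝ (EuclideanSpace ℝ (Fin 2)) + 1 := by simp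
  set b := ht.toAffineBasis hcard
  set b' := ht'.toAffineBasis hcard
  obtain ⟨rfl, rfl, rfl⟩ := b.coord_eq_of_barycentric hbary
  obtain ⟨rfl, rfl, rfl⟩ := b'.coord_eq_of_barycentric hbary'
  obtain rfl : P = b.bernsteinPoly β :=
    funext fun q => by rw [hP, sum_mul_bern_eq_bernsteinForm]; rfl
  obtain rfl : P' = b'.bernsteinPoly β' :=
    funext fun q => by rw [hP', sum_mul_bern_eq_bernsteinForm]; rfl
  have hedge : ∀ x ∈ frontier {q | 0 ≤ b.coord 2 q},
      AgreeToFirstOrderAt ℝ (b.bernsteinPoly β) (b'.bernsteinPoly β') x := fun x hx =>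
    AffineBasis.agreeToFirstOrderAt_of_coord_eq_zero (b := b) (b' := b') rfl rfl ⟨hvi, hvi'⟩
      ⟨hvj, hvj'⟩ hcoef
      (frontier_le_subset_eq continuous_const (b.contDiff_coord 2 (n := 0)).continuous hx).symm
  refine (ContDiff.piecewise_of_frontier (b.contDiff_bernsteinPoly β)
    (b'.contDiff_bernsteinPoly β') hedge).contDiffAt.congr_of_eventuallyEq ?_
  have hrange : range b = {vi, vj, vk} := by
    simp only [b, AffineIndependent.coe_toAffineBasis, Matrix.range_cons, Matrix.range_empty,
      Set.union_empty, Set.singleton_union]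
  filter_upwards [b.eventually_mem_convexHull_iff hp] with q hq
  rw [hrange] at hq
  by_cases hq2 : 0 ≤ b.coord 2 q
  · simp [hq2, (hS q).1 (hq.mpr hq2)]
  · simp [hq2, (hS q).2 (mt hq.mp hq2)]

/-- the C¹ joining condition across a shared edge. -/
theorem c1_join_across_edge
    (vi vj vk vk' : EuclideanSpace ℝ (Fin 2))
    (ht : AffineIndependent ℝ ![vi, vj, vk])
    (ht' : AffineIndependent ℝ ![vi, vj, vk'])
    (τi τj τk : EuclideanSpace ℝ (Fin 2) → ℝ)
    (hbary : ∀ p, τi p + τj p + τk p = 1 ∧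
      p = τi p • vi + τj p • vj + τk p • vk)
    -- vk and vk' lie on opposite sides of the line through vi and vj:
    (hopp : τk vk' < 0)
    (τi' τj' τk' : EuclideanSpace ℝ (Fin 2) → ℝ)
    (hbary' : ∀ p, τi' p + τj' p + τk' p = 1 ∧
      p = τi' p • vi + τj' p • vj + τk' p • vk')
    (P P' : EuclideanSpace ℝ (Fin 2) → ℝ) (β β' : ℕ × ℕ × ℕ → ℝ)
    (hP : ∀ p, P p = ∑ d ∈ D3, β d * bern τi τj τk d p)
    (hP' : ∀ p, P' p = ∑ d ∈ D3, β' d * bern τi' τj' τk' d p)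
    -- P and P' agree to first order at vi and vj:
    (hvi : P vi = P' vi) (hvi' : fderiv ℝ P vi = fderiv ℝ P' vi)
    (hvj : P vj = P' vj) (hvj' : fderiv ℝ P vj = fderiv ℝ P' vj)
    -- the coefficient condition:
    (hcoef : β' (1, 1, 1) =
      τi vk' * β (2, 1, 0) + τj vk' * β (1, 2, 0) + τk vk' * β (1, 1, 1))
    -- S equals P on the triangle t and P' elsewhere (in particular on t'):
    (S : EuclideanSpace ℝ (Fin 2) → ℝ)
    (hS : ∀ q, (q ∈ convexHull ℝ ({vi, vj, vk} : Set (EuclideanSpace ℝ (Fin 2))) →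
        S q = P q) ∧
      (q ∉ convexHull ℝ ({vi, vj, vk} : Set (EuclideanSpace ℝ (Fin 2))) →
        S q = P' q)) :
    ∀ p ∈ openSegment ℝ vi vj, ContDiffAt ℝ 1 S p :=
  c1_join_across_edge_general vi vj vk vk' ht ht' τi τj τk hbary τi' τj' τk' hbary' P P' β β' hP hP'
    hvi hvi' hvj hvj' hcoef S hS
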